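/- arXiv:math/0501202 — 2 statements merged into one kernel-verified Lean document; each statement's English description precedes it below -/
import Mathlib

section
/- For sl_2, the Laurent polynomial m_{k,a}(1 + A_{aq}^{-1})(1 + A_{aq^3}^{-1})···(1 + A_{aq^{2k-1}}^{-1}) (the q-character of the tensor product L(Y_a) ⊗ L(Y_{aq^2}) ⊗ ··· ⊗ L(Y_{aq^{2(k-1)}})) has exactly 2^k monomials, all distinct and each with coefficient 1. -/
/-!
Write `P_k = m_{k,a} (1 + A_{aq}⁻¹) ⋯ (1 + A_{aq^{2k-1}}⁻¹)`. Since
`Y_{aq^{2k}} A_{aq^{2k+1}}⁻¹ = Y_{aq^{2k+2}}⁻¹`, the product telescopes: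
`P_{k+1} = (Y_{aq^{2k}} + Y_{aq^{2k+2}}⁻¹) P_k`. As `q` is not a root of unity, no monomial of `P_k`
involves `Y_{aq^n}` for `n > 2k`, so the monomials of the two summands of `P_{k+1}` are told apart
by their exponent of `Y_{aq^{2k+2}}` (`0` versus `-1`). Hence each step doubles the number of
monomials without creating a coefficient other than `1`.
-/

noncomputable section

/-- Laurent monomials in the variables `Y_b`, `b ∈ ℂˣ`, written additively:
a monomial is its finitely supported exponent function. -/
abbrev Mon : Type := ℂˣ →₀ ℤ

/-- The Laurent polynomial ring `ℤ[Y_b^±]`. -/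
abbrev Rng : Type := AddMonoidAlgebra ℤ Mon

/-- The variable `Y_b` as a monomial. -/
def Y (b : ℂˣ) : Mon := Finsupp.single b 1

/-- A monomial viewed as an element of the Laurent polynomial ring. -/
def X (m : Mon) : Rng := AddMonoidAlgebra.single m 1

/-- The monomial `A_b = Y_{bq⁻¹} Y_{bq}` (sl₂ case). -/
def Amon (q b : ℂˣ) : Mon := Y (b * q⁻¹) + Y (b * q)

/-- The highest weight monomial `m_{k,a} = Y_a Y_{aq²} ⋯ Y_{aq^{2(k-1)}}`. -/
def mka (q : ℂˣ) (k : ℕ) (a : ℂˣ) : Mon := ∑ s ∈ Finset.range k, Y (a * q ^ (2 * s))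

/-- The normalized q-character of the sl₂ Kirillov-Reshetikhin module, given by the
nested formula `1 + A_{aq^{2k-1}}⁻¹(1 + A_{aq^{2k-3}}⁻¹(1 + ⋯ (1 + A_{aq}⁻¹)⋯))`. -/
def Nchi (q : ℂˣ) : ℕ → ℂˣ → Rng
  | 0, _ => 1
  | (k+1), a => 1 + X (-(Amon q (a * q ^ (2 * k + 1)))) * Nchi q k a

/-- The q-character `χ_q(W_{k,a}) = m_{k,a}(1 + A_{aq^{2k-1}}⁻¹(1 + ⋯ (1 + A_{aq}⁻¹)⋯))`. -/
def chiW (q : ℂˣ) (k : ℕ) (a : ℂˣ) : Rng := X (mka q k a) * Nchi q k a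

/-- A monomial `m ≠ 1` is right-negative if for each `a`, at the maximal `q`-power shift
`L` where `m` is supported on `a q^L`, the exponent is negative. -/
def RightNeg (q : ℂˣ) (m : Mon) : Prop :=
  m ≠ 0 ∧ ∀ (a : ℂˣ) (L : ℤ), m (a * q ^ L) ≠ 0 →
    (∀ l : ℤ, L < l → m (a * q ^ l) = 0) → m (a * q ^ L) < 0

/-- A monomial is dominant if all its exponents are nonnegative. -/
def Dominant (m : Mon) : Prop := ∀ b, 0 ≤ m b

namespace AddMonoidAlgebra

variable {R G : Type*} [Semiring R]

def IsMultiplicityFree (f : AddMonoidAlgebra R G) : Prop :=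
  ∀ m ∈ f.coeff.support, f.coeff m = 1

theorem isMultiplicityFree_one [Zero G] : IsMultiplicityFree (1 : AddMonoidAlgebra R G) := by
  intro m hm
  rw [one_def, coeff_single] at hm ⊢
  rw [Finset.mem_singleton.1 (Finsupp.support_single_subset hm), Finsupp.single_eq_same]

theorem IsMultiplicityFree.add {f g : AddMonoidAlgebra R G} (hf : IsMultiplicityFree f)
    (hg : IsMultiplicityFree g) (hfg : Disjoint f.coeff.support g.coeff.support) :
    IsMultiplicityFree (f + g) := by
  classical
  intro m hm
  rw [coeff_add, Finsupp.support_add_eq hfg, Finset.mem_union] at hm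
  rw [coeff_add, Finsupp.add_apply]
  rcases hm with hm | hm
  · rw [hf m hm, Finsupp.notMem_support_iff.1 (Finset.disjoint_left.1 hfg hm), add_zero]
  · rw [hg m hm, Finsupp.notMem_support_iff.1 (Finset.disjoint_right.1 hfg hm), zero_add]

variable [AddCancelMonoid G]

theorem support_coeff_single_one_mul (c : G) (f : AddMonoidAlgebra R G) :
    (single c 1 * f).coeff.support = f.coeff.support.map (addLeftEmbedding c) :=
  support_coeff_single_mul f 1 (by simp) c

theorem IsMultiplicityFree.single_one_mul {f : AddMonoidAlgebra R G} (hf : IsMultiplicityFree f)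
    (c : G) : IsMultiplicityFree (single c 1 * f) := by
  intro m hm
  rw [support_coeff_single_one_mul, Finset.mem_map] at hm
  obtain ⟨m, hm, rfl⟩ := hm
  rw [addLeftEmbedding_apply, coeff_single_mul_add, one_mul, hf m hm]

theorem exists_of_mem_support_coeff_single_add_single_mul {f : AddMonoidAlgebra R G} {c d m : G}
    (hm : m ∈ ((single c 1 + single d 1) * f).coeff.support) :
    ∃ m' ∈ f.coeff.support, m = c + m' ∨ m = d + m' := by
  classical
  rw [add_mul, coeff_add] at hm
  rcases Finset.mem_union.1 (Finsupp.support_add hm) with hm | hm <;>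
  · rw [support_coeff_single_one_mul, Finset.mem_map] at hm
    obtain ⟨m', hm', rfl⟩ := hm
    exact ⟨m', hm', by simp⟩

theorem disjoint_support_coeff_single_one_mul {H : Type*} [AddMonoid H] (φ : G →+ H)
    {f : AddMonoidAlgebra R G} (hf : ∀ m ∈ f.coeff.support, φ m = 0) {c d : G} (hcd : φ c ≠ φ d) :
    Disjoint (single c 1 * f).coeff.support (single d 1 * f).coeff.support := by
  simp only [support_coeff_single_one_mul, Finset.disjoint_left, Finset.mem_map,
    addLeftEmbedding_apply]
  rintro _ ⟨m, hm, rfl⟩ ⟨m', hm', he⟩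
  apply hcd
  simpa [hf m hm, hf m' hm'] using (congrArg φ he).symm

theorem card_support_coeff_single_add_single_mul {f : AddMonoidAlgebra R G} {c d : G}
    (hcd : Disjoint (single c 1 * f).coeff.support (single d 1 * f).coeff.support) :
    ((single c 1 + single d 1) * f).coeff.support.card = 2 * f.coeff.support.card := by
  classical
  rw [add_mul, coeff_add, Finsupp.support_add_eq hcd, Finset.card_union_of_disjoint hcd,
    support_coeff_single_one_mul, support_coeff_single_one_mul, Finset.card_map, Finset.card_map,
    two_mul]

theorem IsMultiplicityFree.single_add_single_mul {f : AddMonoidAlgebra R G}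
    (hf : IsMultiplicityFree f) {c d : G}
    (hcd : Disjoint (single c 1 * f).coeff.support (single d 1 * f).coeff.support) :
    IsMultiplicityFree ((single c 1 + single d 1) * f) := by
  rw [add_mul]
  exact (hf.single_one_mul c).add (hf.single_one_mul d) hcd

end AddMonoidAlgebra

theorem injective_pow_of_zpow_ne_one {G : Type*} [Group G] {x : G}
    (hx : ∀ n : ℤ, n ≠ 0 → x ^ n ≠ 1) : Function.Injective (fun n : ℕ => x ^ n) :=
  injective_pow_iff_not_isOfFinOrder.2 fun h => by
    obtain ⟨n, hn, hxn⟩ := isOfFinOrder_iff_zpow_eq_one.1 h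
    exact hx n hn hxn

section KirillovReshetikhin

open AddMonoidAlgebra

theorem X_zero : X 0 = 1 := one_def.symm

theorem X_add (c d : Mon) : X (c + d) = X c * X d := by
  rw [X, X, X, single_mul_single, one_mul]

theorem Y_sub_Amon (q b : ℂˣ) : Y (b * q⁻¹) - Amon q b = -Y (b * q) := by
  rw [Amon]; abel

variable (q a : ℂˣ)

def tensorQChar (k : ℕ) : Rng :=
  X (mka q k a) * ∏ s ∈ Finset.range k, (1 + X (-(Amon q (a * q ^ (2 * s + 1)))))

theorem tensorQChar_zero : tensorQChar q a 0 = 1 := by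
  simp [tensorQChar, mka, X_zero]

theorem tensorQChar_succ (k : ℕ) :
    tensorQChar q a (k + 1) =
      (X (Y (a * q ^ (2 * k))) + X (-Y (a * q ^ (2 * k + 2)))) * tensorQChar q a k := by
  have hY : Y (a * q ^ (2 * k)) - Amon q (a * q ^ (2 * k + 1)) = -Y (a * q ^ (2 * k + 2)) := by
    simpa [pow_succ, mul_assoc] using Y_sub_Amon q (a * q ^ (2 * k + 1))
  rw [tensorQChar, tensorQChar, mka, mka, Finset.sum_range_succ, Finset.prod_range_succ, ← hY,
    sub_eq_add_neg, X_add, X_add]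
  ring

variable {q}

theorem Y_mul_pow_apply_of_ne (hq : Function.Injective (fun n : ℕ => q ^ n)) {i j : ℕ}
    (hij : i ≠ j) : Y (a * q ^ i) (a * q ^ j) = 0 :=
  Finsupp.single_eq_of_ne fun h => hij (hq (mul_left_cancel h)).symm

theorem tensorQChar_apply_eq_zero (hq : Function.Injective (fun n : ℕ => q ^ n)) {k : ℕ}
    {m : Mon} (hm : m ∈ (tensorQChar q a k).coeff.support) {n : ℕ} (hn : 2 * k < n) : m (a * q ^ n) = 0 := by
  induction k generalizing m with
  | zero =>
    rw [tensorQChar_zero, one_def, coeff_single] at hm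
    rw [Finset.mem_singleton.1 (Finsupp.support_single_subset hm), Finsupp.zero_apply]
  | succ k ih =>
    rw [tensorQChar_succ] at hm
    obtain ⟨m', hm', rfl | rfl⟩ := exists_of_mem_support_coeff_single_add_single_mul hm
    · rw [Finsupp.add_apply, Y_mul_pow_apply_of_ne a hq (by omega : 2 * k ≠ n), ih hm' (by omega),
        add_zero]
    · rw [Finsupp.add_apply, Finsupp.neg_apply,
        Y_mul_pow_apply_of_ne a hq (by omega : 2 * k + 2 ≠ n), ih hm' (by omega), neg_zero, add_zero]

theorem disjoint_support_tensorQChar (hq : Function.Injective (fun n : ℕ => q ^ n)) (k : ℕ) :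
    Disjoint (X (Y (a * q ^ (2 * k))) * tensorQChar q a k).coeff.support
      (X (-Y (a * q ^ (2 * k + 2))) * tensorQChar q a k).coeff.support :=
  disjoint_support_coeff_single_one_mul (Finsupp.applyAddHom (a * q ^ (2 * k + 2)))
    (fun _ hm => tensorQChar_apply_eq_zero a hq hm (by omega))
    (by
      rw [Finsupp.applyAddHom_apply, Finsupp.applyAddHom_apply, Finsupp.neg_apply,
        Y_mul_pow_apply_of_ne a hq (by omega : 2 * k ≠ 2 * k + 2), Y, Finsupp.single_eq_same]
      decide)

theorem card_support_tensorQChar (hq : Function.Injective (fun n : ℕ => q ^ n)) (k : ℕ) :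
    (tensorQChar q a k).coeff.support.card = 2 ^ k := by
  induction k with
  | zero => simp [tensorQChar_zero]
  | succ k ih =>
    rw [tensorQChar_succ, X, X,
      card_support_coeff_single_add_single_mul (disjoint_support_tensorQChar a hq k), ih, pow_succ,
      mul_comm]

theorem isMultiplicityFree_tensorQChar (hq : Function.Injective (fun n : ℕ => q ^ n)) (k : ℕ) :
    IsMultiplicityFree (tensorQChar q a k) := by
  induction k with
  | zero => exact tensorQChar_zero q a ▸ isMultiplicityFree_one
  | succ k ih =>
    rw [tensorQChar_succ]
    exact ih.single_add_single_mul (disjoint_support_tensorQChar a hq k)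

end KirillovReshetikhin

/-- for sl₂, the Laurent polynomial
`m_{k,a}(1+A_{aq}⁻¹)(1+A_{aq³}⁻¹)⋯(1+A_{aq^{2k-1}}⁻¹)` has exactly `2^k` monomials,
all distinct and each with coefficient `1`. -/
theorem kr_sl2_tensor_product (q : ℂˣ) (hq : ∀ n : ℤ, n ≠ 0 → q ^ n ≠ 1) (k : ℕ) (a : ℂˣ) :
    (X (mka q k a) * ∏ s ∈ Finset.range k, (1 + X (-(Amon q (a * q ^ (2 * s + 1)))))).coeff.support.card
        = 2 ^ k ∧
      ∀ m ∈ (X (mka q k a) *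
          ∏ s ∈ Finset.range k, (1 + X (-(Amon q (a * q ^ (2 * s + 1)))))).coeff.support,
        (X (mka q k a) * ∏ s ∈ Finset.range k, (1 + X (-(Amon q (a * q ^ (2 * s + 1)))))).coeff m = 1 :=
  ⟨card_support_tensorQChar a (injective_pow_of_zpow_ne_one hq) k,
    isMultiplicityFree_tensorQChar a (injective_pow_of_zpow_ne_one hq) k⟩
end
end

section
/- For sl_2, the dominant monomials of the product χ_q(W_{k,a})·χ_q(W_{k,aq^2}) are exactly M, M A_{aq^{2k-1}}^{-1}, M A_{aq^{2k-1}}^{-1}A_{aq^{2k-3}}^{-1}, ..., M A_{aq^{2k-1}}^{-1}···A_{aq}^{-1}, where M = m_{k,a} m_{k,aq^2}, and each occurs with coefficient exactly 1. -/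
noncomputable section

/-!
Write `c_s = a q^{2s}`; since `q` is not a root of unity these points are distinct. The terms of
`χ_q(W_{k,a})` are `Y_{c_0} ⋯ Y_{c_{j-1}} Y_{c_{j+1}}⁻¹ ⋯ Y_{c_k}⁻¹` for `0 ≤ j ≤ k`, and those of
`χ_q(W_{k,aq²})` are the same monomials shifted by one step along the string. In a product of two
terms, `Y_{c_{k+1}}` has exponent `-1` unless the second factor is its highest monomial `m_{k,aq²}`;
in that case the positive part `Y_{c_1} ⋯ Y_{c_k}` of `m_{k,aq²}` cancels all the negative
exponents of the first factor, so the product is dominant. The first factor is recovered from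
such a dominant product, which gives coefficient `1`.
-/

open Finset

namespace KirillovReshetikhin

variable {q : ℂˣ}

lemma orderOf_eq_zero_of_zpow_ne_one (hq : ∀ n : ℤ, n ≠ 0 → q ^ n ≠ 1) : orderOf q = 0 :=
  orderOf_eq_zero_iff.mpr fun h ↦ by
    obtain ⟨n, hn, h1⟩ := isOfFinOrder_iff_zpow_eq_one.mp h
    exact hq n hn h1

lemma mul_pow_two_mul_inj (hq : orderOf q = 0) (b : ℂˣ) {s n : ℕ} :
    b * q ^ (2 * s) = b * q ^ (2 * n) ↔ s = n := by
  rw [mul_right_inj, pow_inj_iff_of_orderOf_eq_zero hq]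
  omega

lemma X_add (m n : Mon) : X (m + n) = X m * X n := by
  simp [X, AddMonoidAlgebra.single_mul_single]

lemma coeff_sum_X {ι : Type*} (s : Finset ι) (f : ι → Mon) (m : Mon) :
    (∑ i ∈ s, X (f i)).coeff m = #{i ∈ s | f i = m} := by
  simp only [AddMonoidAlgebra.coeff_sum, Finsupp.finsetSum_apply, X,
    AddMonoidAlgebra.coeff_single, Finsupp.single_apply, Finset.sum_boole]

lemma dominant_iff_nonneg {m : Mon} : Dominant m ↔ 0 ≤ m := by
  rw [Finsupp.le_def]; rfl

lemma Amon_mul_pow_odd (q b : ℂˣ) (j : ℕ) :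
    Amon q (b * q ^ (2 * j + 1)) = Y (b * q ^ (2 * j)) + Y (b * q ^ (2 * (j + 1))) := by
  rw [Amon]
  congr 2 <;> group

/-- The `j`-th monomial `m_{k,b} A_{bq^{2k-1}}⁻¹ ⋯ A_{bq^{2j+1}}⁻¹` of `χ_q(W_{k,b})`, in the closed
form `Y_b ⋯ Y_{bq^{2(j-1)}} Y_{bq^{2(j+1)}}⁻¹ ⋯ Y_{bq^{2k}}⁻¹`. -/
def krMon (q : ℂˣ) (k : ℕ) (b : ℂˣ) (j : ℕ) : Mon :=
  ∑ s ∈ range j, Y (b * q ^ (2 * s)) - ∑ s ∈ Ico (j + 1) (k + 1), Y (b * q ^ (2 * s))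

lemma krMon_self (q b : ℂˣ) (k : ℕ) : krMon q k b k = mka q k b := by
  simp [krMon, mka]

lemma krMon_succ (q b : ℂˣ) {k j : ℕ} (hj : j ≤ k) :
    krMon q (k + 1) b j = krMon q k b j - Y (b * q ^ (2 * (k + 1))) := by
  rw [krMon, krMon, sum_Ico_succ_top (by omega)]
  abel

lemma krMon_succ_sub_Amon (q b : ℂˣ) {k j : ℕ} (hj : j < k) :
    krMon q k b (j + 1) - Amon q (b * q ^ (2 * j + 1)) = krMon q k b j := by
  rw [krMon, krMon, Amon_mul_pow_odd, sum_range_succ,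
    sum_eq_sum_Ico_succ_bot (by omega : j + 1 < k + 1)]
  abel

lemma chiW_succ (q b : ℂˣ) (k : ℕ) :
    chiW q (k + 1) b = X (mka q (k + 1) b) + X (-Y (b * q ^ (2 * (k + 1)))) * chiW q k b := by
  have hA : mka q (k + 1) b - Amon q (b * q ^ (2 * k + 1)) =
      -Y (b * q ^ (2 * (k + 1))) + mka q k b := by
    rw [mka, mka, sum_range_succ, Amon_mul_pow_odd]
    abel
  rw [chiW, chiW, Nchi, mul_add, mul_one, ← mul_assoc, ← X_add, ← sub_eq_add_neg, hA, X_add,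
    mul_assoc]

lemma chiW_eq_sum_krMon (q b : ℂˣ) (k : ℕ) :
    chiW q k b = ∑ j ∈ range (k + 1), X (krMon q k b j) := by
  induction k with
  | zero => simp [chiW, Nchi, krMon_self]
  | succ k ih =>
    rw [chiW_succ, ih, mul_sum, sum_range_succ _ (k + 1), krMon_self, add_comm]
    congr 1
    refine sum_congr rfl fun j hj ↦ ?_
    rw [krMon_succ q b (by simpa [Nat.lt_succ_iff] using hj), sub_eq_neg_add, X_add]

lemma krMon_eq_mka_sub_sum_Amon (q b : ℂˣ) {k t : ℕ} (ht : t ≤ k) :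
    krMon q k b (k - t) =
      mka q k b - ∑ j ∈ range t, Amon q (b * q ^ (2 * (k : ℤ) - 1 - 2 * (j : ℤ))) := by
  induction t with
  | zero => simp [krMon_self]
  | succ t ih =>
    have hexp : (2 * (k : ℤ) - 1 - 2 * (t : ℤ)) = ((2 * (k - (t + 1)) + 1 : ℕ) : ℤ) := by omega
    rw [sum_range_succ, sub_add_eq_sub_sub, ← ih (by omega), hexp, zpow_natCast,
      show k - t = k - (t + 1) + 1 by omega, krMon_succ_sub_Amon q b (by omega)]

lemma sum_Y_apply (hq : orderOf q = 0) (b : ℂˣ) (S : Finset ℕ) (n : ℕ) :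
    (∑ s ∈ S, Y (b * q ^ (2 * s))) (b * q ^ (2 * n)) = if n ∈ S then 1 else 0 := by
  simp only [Finsupp.finsetSum_apply, Y, Finsupp.single_apply, mul_pow_two_mul_inj hq,
    sum_ite_eq']

lemma krMon_apply (hq : orderOf q = 0) (b : ℂˣ) (k j n : ℕ) :
    krMon q k b j (b * q ^ (2 * n)) =
      (if n < j then 1 else 0) - if j < n ∧ n ≤ k then 1 else 0 := by
  simp only [krMon, Finsupp.sub_apply, sum_Y_apply hq, mem_range, mem_Ico, Nat.lt_succ_iff,
    Nat.succ_le_iff]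

lemma krMon_injective (hq : orderOf q = 0) (b : ℂˣ) (k : ℕ) :
    Function.Injective (krMon q k b) := by
  have key : ∀ {j j'}, j < j' → krMon q k b j ≠ krMon q k b j' := fun {j _} hlt he ↦ by
    have := congrArg (· (b * q ^ (2 * j))) he
    simp [krMon_apply hq, hlt, hlt.not_gt] at this
  intro j j' he
  rcases lt_trichotomy j j' with h | h | h
  exacts [(key h he).elim, h, (key h he.symm).elim]

lemma mka_mul_sq (q b : ℂˣ) (k : ℕ) :
    mka q k (b * q ^ 2) = ∑ s ∈ Ico 1 (k + 1), Y (b * q ^ (2 * s)) := by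
  rw [mka, range_eq_Ico, ← sum_Ico_add' _ 0 k 1]
  refine sum_congr rfl fun s _ ↦ ?_
  rw [mul_assoc, ← pow_add, mul_add, mul_one, add_comm]

def krProdMon (q : ℂˣ) (k : ℕ) (a : ℂˣ) (p : ℕ × ℕ) : Mon :=
  krMon q k a p.1 + krMon q k (a * q ^ 2) p.2

lemma chiW_mul_chiW_eq_sum (q a : ℂˣ) (k : ℕ) :
    chiW q k a * chiW q k (a * q ^ 2) =
      ∑ p ∈ range (k + 1) ×ˢ range (k + 1), X (krProdMon q k a p) := by
  simp only [chiW_eq_sum_krMon, sum_mul_sum, ← X_add, krProdMon, sum_product]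

lemma krProdMon_eq_sum_Y (q a : ℂˣ) {k j : ℕ} (hj : j ≤ k) :
    krProdMon q k a (j, k) =
      ∑ s ∈ range j, Y (a * q ^ (2 * s)) + ∑ s ∈ Ico 1 (j + 1), Y (a * q ^ (2 * s)) := by
  rw [krProdMon, krMon_self, mka_mul_sq, krMon,
    ← sum_Ico_consecutive _ (by omega : 1 ≤ j + 1) (by omega : j + 1 ≤ k + 1)]
  abel

lemma dominant_krProdMon_iff (hq : orderOf q = 0) (a : ℂˣ) {k j j' : ℕ} (hj : j ≤ k)
    (hj' : j' ≤ k) : Dominant (krProdMon q k a (j, j')) ↔ j' = k := by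
  constructor
  · intro hdom
    by_contra hne
    have h := hdom (a * q ^ (2 * (k + 1)))
    have hpt : a * q ^ (2 * (k + 1)) = a * q ^ 2 * q ^ (2 * k) := by group
    rw [krProdMon, Finsupp.add_apply, krMon_apply hq, hpt, krMon_apply hq] at h
    split_ifs at h <;> omega
  · rintro rfl
    rw [dominant_iff_nonneg, krProdMon_eq_sum_Y q a hj]
    exact add_nonneg (sum_nonneg fun _ _ ↦ Finsupp.single_nonneg.mpr zero_le_one)
      (sum_nonneg fun _ _ ↦ Finsupp.single_nonneg.mpr zero_le_one)

lemma krProdMon_eq_iff (hq : orderOf q = 0) (a : ℂˣ) {k j : ℕ} {p : ℕ × ℕ}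
    (hp : p ∈ range (k + 1) ×ˢ range (k + 1)) (hj : j ≤ k) :
    krProdMon q k a p = krProdMon q k a (j, k) ↔ p = (j, k) := by
  refine ⟨fun he ↦ ?_, fun he ↦ he ▸ rfl⟩
  obtain ⟨j₁, j₂⟩ := p
  simp only [mem_product, mem_range, Nat.lt_succ_iff] at hp
  have hj₂ : j₂ = k := (dominant_krProdMon_iff hq a hp.1 hp.2).mp <|
    he ▸ (dominant_krProdMon_iff hq a hj le_rfl).mpr rfl
  simp only [hj₂, krProdMon, add_left_inj] at he
  rw [krMon_injective hq a k he, hj₂]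

lemma coeff_chiW_mul_chiW_krProdMon (hq : orderOf q = 0) (a : ℂˣ) {k j : ℕ} (hj : j ≤ k) :
    (chiW q k a * chiW q k (a * q ^ 2)).coeff (krProdMon q k a (j, k)) = 1 := by
  rw [chiW_mul_chiW_eq_sum, coeff_sum_X,
    filter_congr fun p hp ↦ krProdMon_eq_iff hq a hp hj, filter_eq',
    if_pos (by simp; omega), card_singleton, Nat.cast_one]

lemma mka_add_mka_sub_sum_Amon (q a : ℂˣ) {k t : ℕ} (ht : t ≤ k) :
    mka q k a + mka q k (a * q ^ 2)
        - ∑ j ∈ range t, Amon q (a * q ^ (2 * (k : ℤ) - 1 - 2 * (j : ℤ))) =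
      krProdMon q k a (k - t, k) := by
  rw [krProdMon, krMon_eq_mka_sub_sum_Amon q a ht, krMon_self]
  abel

end KirillovReshetikhin

open KirillovReshetikhin

theorem kr_sl2_dominant_monomials_general (q : ℂˣ) (hq : ∀ n : ℤ, n ≠ 0 → q ^ n ≠ 1)
    (k : ℕ) (a : ℂˣ) :
    (∀ m : Mon,
        (m ∈ (chiW q k a * chiW q k (a * q ^ 2)).coeff.support ∧ Dominant m) ↔
          ∃ t ≤ k, m = mka q k a + mka q k (a * q ^ 2)
            - ∑ j ∈ Finset.range t, Amon q (a * q ^ (2 * (k : ℤ) - 1 - 2 * (j : ℤ)))) ∧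
      ∀ t ≤ k,
        (chiW q k a * chiW q k (a * q ^ 2)).coeff
          (mka q k a + mka q k (a * q ^ 2)
            - ∑ j ∈ Finset.range t, Amon q (a * q ^ (2 * (k : ℤ) - 1 - 2 * (j : ℤ)))) = 1 := by
  have hq0 := orderOf_eq_zero_of_zpow_ne_one hq
  refine ⟨fun m ↦ ⟨?_, ?_⟩, fun t ht ↦ ?_⟩
  · rintro ⟨hm, hdom⟩
    rw [Finsupp.mem_support_iff, chiW_mul_chiW_eq_sum, coeff_sum_X, Nat.cast_ne_zero,
      ← Nat.pos_iff_ne_zero, card_pos] at hm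
    obtain ⟨⟨j, j'⟩, hp⟩ := hm
    simp only [mem_filter, mem_product, mem_range, Nat.lt_succ_iff] at hp
    obtain ⟨⟨hj, hj'⟩, rfl⟩ := hp
    obtain rfl := (dominant_krProdMon_iff hq0 a hj hj').mp hdom
    refine ⟨j' - j, by omega, ?_⟩
    rw [mka_add_mka_sub_sum_Amon q a (by omega), Nat.sub_sub_self hj]
  · rintro ⟨t, ht, rfl⟩
    rw [mka_add_mka_sub_sum_Amon q a ht, Finsupp.mem_support_iff,
      coeff_chiW_mul_chiW_krProdMon hq0 a (by omega)]
    exact ⟨one_ne_zero, (dominant_krProdMon_iff hq0 a (by omega) le_rfl).mpr rfl⟩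
  · rw [mka_add_mka_sub_sum_Amon q a ht, coeff_chiW_mul_chiW_krProdMon hq0 a (by omega)]

/-- for sl₂ the dominant monomials of `χ_q(W_{k,a})·χ_q(W_{k,aq²})` are
exactly `M, M A_{aq^{2k-1}}⁻¹, …, M A_{aq^{2k-1}}⁻¹⋯A_{aq}⁻¹` with `M = m_{k,a} m_{k,aq²}`,
each occurring with coefficient exactly `1`. -/
theorem kr_sl2_dominant_monomials (q : ℂˣ) (hq : ∀ n : ℤ, n ≠ 0 → q ^ n ≠ 1)
    (k : ℕ) (hk : 1 ≤ k) (a : ℂˣ) :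
    (∀ m : Mon,
        (m ∈ (chiW q k a * chiW q k (a * q ^ 2)).coeff.support ∧ Dominant m) ↔
          ∃ t ≤ k, m = mka q k a + mka q k (a * q ^ 2)
            - ∑ j ∈ Finset.range t, Amon q (a * q ^ (2 * (k : ℤ) - 1 - 2 * (j : ℤ)))) ∧
      ∀ t ≤ k,
        (chiW q k a * chiW q k (a * q ^ 2)).coeff
          (mka q k a + mka q k (a * q ^ 2)
            - ∑ j ∈ Finset.range t, Amon q (a * q ^ (2 * (k : ℤ) - 1 - 2 * (j : ℤ)))) = 1 :=
  kr_sl2_dominant_monomials_general q hq k a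
end
end
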